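/- arXiv:1306.2117 — 3 statements merged into one kernel-verified Lean document; each statement's English description precedes it below -/
import Mathlib

section
/- (Theorem 1, reconstruction of the Lax pair.) Let κ > 0 be a real constant and σ, v, α : ℝ² → ℝ smooth with σ nowhere zero. Suppose b₊, b₁ : ℝ² → ℝ are smooth and satisfy the governing system: (i) ∂_t((κ·b₊ + v)/σ) + ∂_x(∂_x b₊ − b₊·(κ·b₊ + v)/σ − 2·b₁) = 0 and (ii) ∂_t((κ·b₁ − α)/σ) + ∂_x∂_x b₁ − b₊·∂_x((κ·b₁ − α)/σ) + ((κ·b₊ + v)/σ)·∂_x b₁ = 2·((κ·b₁ − α)/σ)·∂_x b₊. Let L₊ : ℝ² → ℝ be any smooth nowhere-zero function and L₁ : ℝ² → ℝ any smooth function, and define B₊ = b₊·L₊, L₂ = −(κ·b₊ + v)/σ − (∂_x L₊)/L₊ − L₁, B₁ = b₊·L₁ − b₁, B₂ = ∂_x b₊ − b₊·(κ·b₊ + v)/σ − 2·b₁ − (∂_t L₊)/L₊ − B₁, L₋ = (1/L₊)·((κ·b₁ − α − (κ·b₊ + v)·L₁)/σ − L₁² − ∂_x L₁), and B₋ = b₊·L₋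 + (∂_x B₁ − ∂_t L₁)/L₊. Then these entries satisfy on ℝ² the constraints κ·B₁ + σ·(∂_x L₁ + L₁² + L₊·L₋) + v·L₁ + α = 0 and κ·B₊ + σ·(∂_x L₊ + (L₁+L₂)·L₊) + v·L₊ = 0, together with the zero-curvature equations ∂_t L₁ = ∂_x B₁ + B₊·L₋ − B₋·L₊, ∂_t L₊ = ∂_x B₊ + (B₁−B₂)·L₊ − B₊·(L₁−L₂), ∂_t L₋ = ∂_x B₋ + B₋·(L₁−L₂) − (B₁−B₂)·L₋, and ∂_t(L₁+L₂) = ∂_x(B₁+B₂). -/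
open scoped BigOperators

/-- Partial derivative in the first ("time") variable. -/
noncomputable def pT (F : ℝ → ℝ → ℝ) : ℝ → ℝ → ℝ := fun t x => deriv (fun s => F s x) t

/-- Partial derivative in the second ("space") variable. -/
noncomputable def pX (F : ℝ → ℝ → ℝ) : ℝ → ℝ → ℝ := fun t x => deriv (fun y => F t y) x

lemma hdT (F : ℝ → ℝ → ℝ) (hF : ContDiff ℝ (⊤ : ℕ∞) (Function.uncurry F)) (t x : ℝ) :
    HasDerivAt (fun s => F s x) (pT F t x) t := by
  have h : DifferentiableAt ℝ (fun s => F s x) t := by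
    have h1 : DifferentiableAt ℝ (Function.uncurry F) (t, x) :=
      (hF.differentiable (by simp)).differentiableAt
    exact h1.comp t ((differentiableAt_id (𝕜 := ℝ) (x := t)).prodMk (differentiableAt_const x))
  exact h.hasDerivAt

lemma hdX (F : ℝ → ℝ → ℝ) (hF : ContDiff ℝ (⊤ : ℕ∞) (Function.uncurry F)) (t x : ℝ) :
    HasDerivAt (fun y => F t y) (pX F t x) x := by
  have h : DifferentiableAt ℝ (fun y => F t y) x := by
    have h1 : DifferentiableAt ℝ (Function.uncurry F) (t, x) :=
      (hF.differentiable (by simp)).differentiableAt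
    exact h1.comp x ((differentiableAt_const t).prodMk differentiableAt_id)
  exact h.hasDerivAt

lemma pT_eq_fderiv (F : ℝ → ℝ → ℝ) (hF : ContDiff ℝ (⊤ : ℕ∞) (Function.uncurry F)) (t x : ℝ) :
    pT F t x = fderiv ℝ (Function.uncurry F) (t, x) (1, 0) := by
  have h2 : HasDerivAt (fun s : ℝ => ((s, x) : ℝ × ℝ)) ((1:ℝ), (0:ℝ)) t :=
    (hasDerivAt_id t).prodMk (hasDerivAt_const t x)
  have h1 : HasFDerivAt (Function.uncurry F) (fderiv ℝ (Function.uncurry F) (t, x)) (t, x) :=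
    (hF.differentiable (by simp) (t, x)).hasFDerivAt
  exact (h1.comp_hasDerivAt t h2).deriv

lemma pX_eq_fderiv (F : ℝ → ℝ → ℝ) (hF : ContDiff ℝ (⊤ : ℕ∞) (Function.uncurry F)) (t x : ℝ) :
    pX F t x = fderiv ℝ (Function.uncurry F) (t, x) (0, 1) := by
  have h2 : HasDerivAt (fun y : ℝ => ((t, y) : ℝ × ℝ)) ((0:ℝ), (1:ℝ)) x :=
    (hasDerivAt_const x t).prodMk (hasDerivAt_id x)
  have h1 : HasFDerivAt (Function.uncurry F) (fderiv ℝ (Function.uncurry F) (t, x)) (t, x) :=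
    (hF.differentiable (by simp) (t, x)).hasFDerivAt
  exact (h1.comp_hasDerivAt x h2).deriv

lemma smooth_pX (F : ℝ → ℝ → ℝ) (hF : ContDiff ℝ (⊤ : ℕ∞) (Function.uncurry F)) :
    ContDiff ℝ (⊤ : ℕ∞) (Function.uncurry (pX F)) := by
  have h : Function.uncurry (pX F) = fun p : ℝ × ℝ => fderiv ℝ (Function.uncurry F) p (0, 1) := by
    funext p
    exact pX_eq_fderiv F hF p.1 p.2
  rw [h]
  exact (hF.fderiv_right (by simp)).clm_apply contDiff_const

lemma smooth_pT (F : ℝ → ℝ → ℝ) (hF : ContDiff ℝ (⊤ : ℕ∞) (Function.uncurry F)) :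
    ContDiff ℝ (⊤ : ℕ∞) (Function.uncurry (pT F)) := by
  have h : Function.uncurry (pT F) = fun p : ℝ × ℝ => fderiv ℝ (Function.uncurry F) p (1, 0) := by
    funext p
    exact pT_eq_fderiv F hF p.1 p.2
  rw [h]
  exact (hF.fderiv_right (by simp)).clm_apply contDiff_const

lemma schwarz (F : ℝ → ℝ → ℝ) (hF : ContDiff ℝ (⊤ : ℕ∞) (Function.uncurry F)) (t x : ℝ) :
    pT (pX F) t x = pX (pT F) t x := by
  have hsym : IsSymmSndFDerivAt ℝ (Function.uncurry F) (t, x) :=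
    hF.contDiffAt.isSymmSndFDerivAt (by rw [minSmoothness_of_isRCLikeNormedField]; exact WithTop.coe_le_coe.mpr le_top)
  have hdiff : Differentiable ℝ (fderiv ℝ (Function.uncurry F)) :=
    (hF.fderiv_right (m := (⊤ : ℕ∞)) (by simp)).differentiable (by simp)
  have e1 : pT (pX F) t x
      = fderiv ℝ (fderiv ℝ (Function.uncurry F)) (t, x) (1, 0) (0, 1) := by
    rw [pT_eq_fderiv (pX F) (smooth_pX F hF) t x]
    have h : Function.uncurry (pX F)
        = fun p : ℝ × ℝ => fderiv ℝ (Function.uncurry F) p (0, 1) := by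
      funext p; exact pX_eq_fderiv F hF p.1 p.2
    rw [h, fderiv_clm_apply (hdiff.differentiableAt) (differentiableAt_const _)]
    simp
  have e2 : pX (pT F) t x
      = fderiv ℝ (fderiv ℝ (Function.uncurry F)) (t, x) (0, 1) (1, 0) := by
    rw [pX_eq_fderiv (pT F) (smooth_pT F hF) t x]
    have h : Function.uncurry (pT F)
        = fun p : ℝ × ℝ => fderiv ℝ (Function.uncurry F) p (1, 0) := by
      funext p; exact pT_eq_fderiv F hF p.1 p.2
    rw [h, fderiv_clm_apply (hdiff.differentiableAt) (differentiableAt_const _)]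
    simp
  rw [e1, e2, hsym (1,0) (0,1)]

set_option maxHeartbeats 4000000 in
/-- Theorem 1, reconstruction of the Lax pair: given a solution
`(b₊, b₁)` of the governing system (2.24)–(2.25), any smooth nowhere-zero `L₊` and
any smooth `L₁`, the entries defined by the formulas (2.26)–(2.31) satisfy the
constraints (2.8)–(2.9) and the zero-curvature equations (2.10)–(2.13). -/
theorem lax_pair_reconstruction
    (κ : ℝ) (hκ : 0 < κ) (σ v α : ℝ → ℝ → ℝ)
    (hσ : ContDiff ℝ (⊤ : ℕ∞) (fun p : ℝ × ℝ => σ p.1 p.2))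
    (hv : ContDiff ℝ (⊤ : ℕ∞) (fun p : ℝ × ℝ => v p.1 p.2))
    (hα : ContDiff ℝ (⊤ : ℕ∞) (fun p : ℝ × ℝ => α p.1 p.2))
    (hσ0 : ∀ t x, σ t x ≠ 0)
    (bp b₁ : ℝ → ℝ → ℝ)
    (hbps : ContDiff ℝ (⊤ : ℕ∞) (fun p : ℝ × ℝ => bp p.1 p.2))
    (hb₁s : ContDiff ℝ (⊤ : ℕ∞) (fun p : ℝ × ℝ => b₁ p.1 p.2))
    (hgov1 : ∀ t x, pT (fun t x => (κ * bp t x + v t x) / σ t x) t x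
        + pX (fun t x => pX bp t x - bp t x * (κ * bp t x + v t x) / σ t x
            - 2 * b₁ t x) t x = 0)
    (hgov2 : ∀ t x, pT (fun t x => (κ * b₁ t x - α t x) / σ t x) t x
        + pX (pX b₁) t x
        - bp t x * pX (fun t x => (κ * b₁ t x - α t x) / σ t x) t x
        + ((κ * bp t x + v t x) / σ t x) * pX b₁ t x
        = 2 * ((κ * b₁ t x - α t x) / σ t x) * pX bp t x)
    (Lp L₁ : ℝ → ℝ → ℝ)
    (hLps : ContDiff ℝ (⊤ : ℕ∞) (fun p : ℝ × ℝ => Lp p.1 p.2))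
    (hL₁s : ContDiff ℝ (⊤ : ℕ∞) (fun p : ℝ × ℝ => L₁ p.1 p.2))
    (hLp0 : ∀ t x, Lp t x ≠ 0)
    (Bp L₂ B₁ B₂ Lm Bm : ℝ → ℝ → ℝ)
    (hBp : ∀ t x, Bp t x = bp t x * Lp t x)
    (hL₂ : ∀ t x, L₂ t x = -(κ * bp t x + v t x) / σ t x - pX Lp t x / Lp t x
        - L₁ t x)
    (hB₁ : ∀ t x, B₁ t x = bp t x * L₁ t x - b₁ t x)
    (hB₂ : ∀ t x, B₂ t x = pX bp t x - bp t x * (κ * bp t x + v t x) / σ t x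
        - 2 * b₁ t x - pT Lp t x / Lp t x - B₁ t x)
    (hLm : ∀ t x, Lm t x = (1 / Lp t x)
        * ((κ * b₁ t x - α t x - (κ * bp t x + v t x) * L₁ t x) / σ t x
            - (L₁ t x) ^ 2 - pX L₁ t x))
    (hBm : ∀ t x, Bm t x = bp t x * Lm t x + (pX B₁ t x - pT L₁ t x) / Lp t x) :
    ∀ t x,
      (κ * B₁ t x + σ t x * (pX L₁ t x + (L₁ t x) ^ 2 + Lp t x * Lm t x)
          + v t x * L₁ t x + α t x = 0)
      ∧ (κ * Bp t x + σ t x * (pX Lp t x + (L₁ t x + L₂ t x) * Lp t x)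
          + v t x * Lp t x = 0)
      ∧ (pT L₁ t x = pX B₁ t x + Bp t x * Lm t x - Bm t x * Lp t x)
      ∧ (pT Lp t x = pX Bp t x + (B₁ t x - B₂ t x) * Lp t x
          - Bp t x * (L₁ t x - L₂ t x))
      ∧ (pT Lm t x = pX Bm t x + Bm t x * (L₁ t x - L₂ t x)
          - (B₁ t x - B₂ t x) * Lm t x)
      ∧ (pT (fun t x => L₁ t x + L₂ t x) t x
          = pX (fun t x => B₁ t x + B₂ t x) t x) := by
  -- smoothness of auxiliary functions
  have hUs : ContDiff ℝ (⊤ : ℕ∞)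
      (Function.uncurry (fun t x => (κ * bp t x + v t x) / σ t x)) :=
    ((contDiff_const.mul hbps).add hv).div hσ (fun p => hσ0 p.1 p.2)
  have hWs : ContDiff ℝ (⊤ : ℕ∞)
      (Function.uncurry (fun t x => (κ * b₁ t x - α t x) / σ t x)) :=
    ((contDiff_const.mul hb₁s).sub hα).div hσ (fun p => hσ0 p.1 p.2)
  have hXbp := smooth_pX bp hbps
  have hXb₁ := smooth_pX b₁ hb₁s
  have hXLp := smooth_pX Lp hLps
  have hTLp := smooth_pT Lp hLps
  have hXL₁ := smooth_pX L₁ hL₁s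
  have hTL₁ := smooth_pT L₁ hL₁s
  -- function-level forms of the defined entries
  have hB₁f : B₁ = fun t x => bp t x * L₁ t x - b₁ t x := by
    funext a b; exact hB₁ a b
  have hBpf : Bp = fun t x => bp t x * Lp t x := by
    funext a b; exact hBp a b
  have hL₂f : L₂ = fun t x => -((κ * bp t x + v t x) / σ t x) - pX Lp t x / Lp t x
      - L₁ t x := by
    funext a b; rw [hL₂ a b]; ring
  have hB₁x : ∀ a b, pX (fun t x => bp t x * L₁ t x - b₁ t x) a b
      = pX bp a b * L₁ a b + bp a b * pX L₁ a b - pX b₁ a b := fun a b =>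
    (((hdX bp hbps a b).mul (hdX L₁ hL₁s a b)).sub (hdX b₁ hb₁s a b)).deriv
  have hB₂f : B₂ = fun t x => pX bp t x - bp t x * ((κ * bp t x + v t x) / σ t x)
      - 2 * b₁ t x - pT Lp t x / Lp t x - (bp t x * L₁ t x - b₁ t x) := by
    funext a b; rw [hB₂ a b, hB₁ a b]; ring
  have hLmf : Lm = fun t x => ((κ * b₁ t x - α t x) / σ t x
      - (κ * bp t x + v t x) / σ t x * L₁ t x - L₁ t x ^ 2 - pX L₁ t x) / Lp t x := by
    funext a b; rw [hLm a b]; ring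
  have hBmf : Bm = fun t x => (bp t x * ((κ * b₁ t x - α t x) / σ t x
      - (κ * bp t x + v t x) / σ t x * L₁ t x - L₁ t x ^ 2 - pX L₁ t x)
      + (pX bp t x * L₁ t x + bp t x * pX L₁ t x - pX b₁ t x) - pT L₁ t x) / Lp t x := by
    funext a b
    rw [hBm a b, hLm a b, hB₁f, hB₁x a b]
    ring
  intro t x
  have hg1 : pT (fun t x => (κ * bp t x + v t x) / σ t x) t x
      = -pX (fun t x => pX bp t x - bp t x * (κ * bp t x + v t x) / σ t x
          - 2 * b₁ t x) t x := by linarith [hgov1 t x]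
  have hPx : pX (fun t x => pX bp t x - bp t x * (κ * bp t x + v t x) / σ t x
      - 2 * b₁ t x) t x
      = pX (pX bp) t x - (pX bp t x * ((κ * bp t x + v t x) / σ t x)
        + bp t x * pX (fun t x => (κ * bp t x + v t x) / σ t x) t x)
        - 2 * pX b₁ t x := by
    have hfe : (fun t x => pX bp t x - bp t x * (κ * bp t x + v t x) / σ t x
        - 2 * b₁ t x)
        = (fun t x => pX bp t x - bp t x * ((κ * bp t x + v t x) / σ t x)
          - 2 * b₁ t x) := by
      funext a b; ring
    rw [hfe]
    exact (((hdX (pX bp) hXbp t x).sub ((hdX bp hbps t x).mul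
      (hdX (fun t x => (κ * bp t x + v t x) / σ t x) hUs t x))).sub
      ((hdX b₁ hb₁s t x).const_mul 2)).deriv
  have hg2 : pT (fun t x => (κ * b₁ t x - α t x) / σ t x) t x
      = 2 * ((κ * b₁ t x - α t x) / σ t x) * pX bp t x
        + bp t x * pX (fun t x => (κ * b₁ t x - α t x) / σ t x) t x
        - ((κ * bp t x + v t x) / σ t x) * pX b₁ t x
        - pX (pX b₁) t x := by linarith [hgov2 t x]
  refine ⟨?_, ?_, ?_, ?_, ?_, ?_⟩
  · -- constraint (2.8)
    simp only [hB₁f, hLmf]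
    field_simp [hσ0 t x, hLp0 t x]
    ring
  · -- constraint (2.9)
    simp only [hBpf, hL₂f]
    field_simp [hσ0 t x, hLp0 t x]
    ring
  · -- zero-curvature (2.10)
    simp only [hB₁f, hBpf, hLmf, hBmf]
    rw [hB₁x t x]
    field_simp [hσ0 t x, hLp0 t x]
    ring
  · -- zero-curvature (2.11)
    simp only [hBpf, hB₁f, hB₂f, hL₂f]
    rw [show pX (fun t x => bp t x * Lp t x) t x
        = pX bp t x * Lp t x + bp t x * pX Lp t x from
      ((hdX bp hbps t x).mul (hdX Lp hLps t x)).deriv]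
    field_simp [hσ0 t x, hLp0 t x]
    ring
  · -- zero-curvature (2.12)
    simp only [hLmf, hBmf, hB₁f, hB₂f, hL₂f]
    have h1 := ((((hdT (fun t x => (κ * b₁ t x - α t x) / σ t x) hWs t x).sub
        ((hdT (fun t x => (κ * bp t x + v t x) / σ t x) hUs t x).mul
          (hdT L₁ hL₁s t x))).sub
        ((hdT L₁ hL₁s t x).pow 2)).sub
        (hdT (pX L₁) hXL₁ t x)).div (hdT Lp hLps t x) (hLp0 t x)
    have h2 := ((((hdX bp hbps t x).mul
        ((((hdX (fun t x => (κ * b₁ t x - α t x) / σ t x) hWs t x).sub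
          ((hdX (fun t x => (κ * bp t x + v t x) / σ t x) hUs t x).mul
            (hdX L₁ hL₁s t x))).sub
          ((hdX L₁ hL₁s t x).pow 2)).sub
          (hdX (pX L₁) hXL₁ t x))).add
        ((((hdX (pX bp) hXbp t x).mul (hdX L₁ hL₁s t x)).add
          ((hdX bp hbps t x).mul (hdX (pX L₁) hXL₁ t x))).sub
          (hdX (pX b₁) hXb₁ t x))).sub
        (hdX (pT L₁) hTL₁ t x)).div (hdX Lp hLps t x) (hLp0 t x)
    have e1 : pT (fun t x => ((κ * b₁ t x - α t x) / σ t x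
        - (κ * bp t x + v t x) / σ t x * L₁ t x - L₁ t x ^ 2 - pX L₁ t x)
          / Lp t x) t x = _ := h1.deriv
    have e2 : pX (fun t x => (bp t x * ((κ * b₁ t x - α t x) / σ t x
        - (κ * bp t x + v t x) / σ t x * L₁ t x - L₁ t x ^ 2 - pX L₁ t x)
        + (pX bp t x * L₁ t x + bp t x * pX L₁ t x - pX b₁ t x) - pT L₁ t x)
          / Lp t x) t x = _ := h2.deriv
    rw [e1, e2, hg2, hg1, hPx, schwarz L₁ hL₁s t x]
    simp only [Pi.sub_apply, Pi.mul_apply, Pi.add_apply, Pi.pow_apply, Nat.cast_ofNat, pow_one]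
    field_simp [hσ0 t x, hLp0 t x]
    ring
  · -- zero-curvature (2.13)
    simp only [hB₁f, hB₂f, hL₂f]
    have h1 := (hdT L₁ hL₁s t x).add
      ((((hdT (fun t x => (κ * bp t x + v t x) / σ t x) hUs t x).neg).sub
        ((hdT (pX Lp) hXLp t x).div (hdT Lp hLps t x) (hLp0 t x))).sub
        (hdT L₁ hL₁s t x))
    have h2 := (((hdX bp hbps t x).mul (hdX L₁ hL₁s t x)).sub
        (hdX b₁ hb₁s t x)).add
      (((((hdX (pX bp) hXbp t x).sub ((hdX bp hbps t x).mul
          (hdX (fun t x => (κ * bp t x + v t x) / σ t x) hUs t x))).sub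
          ((hdX b₁ hb₁s t x).const_mul 2)).sub
          ((hdX (pT Lp) hTLp t x).div (hdX Lp hLps t x) (hLp0 t x))).sub
        (((hdX bp hbps t x).mul (hdX L₁ hL₁s t x)).sub (hdX b₁ hb₁s t x)))
    refine h1.deriv.trans (Eq.trans ?_ h2.deriv.symm)
    rw [hg1, hPx, schwarz Lp hLps t x]
    field_simp [hσ0 t x, hLp0 t x]
    ring
end

section
/- Let κ ≥ 1 be an integer, Q₁, …, Q_κ : ℝ → ℝ twice continuously differentiable with Q_j(t) ≠ Q_k(t) for all j ≠ k and all t, and J₀ : ℝ → ℝ continuously differentiable. Set v(t,x) = t − x², R_k(t) = Σ_{j≠k} 1/(Q_k − Q_j), A_k(t) = κ·Q_k' + t − Q_k² − 2·R_k, and on Ω = {(t,x) : x ≠ Q_k(t) for all k} define b₊(t,x) = −(1/κ)·Σ_{k=1}^κ 1/(x − Q_k) and 2·b₁(t,x) = (1/κ)·Σ_{k=1}^κ A_k/(x − Q_k) − (2/κ)·Σ_{k=1}^κ Q_k − J₀(t). Then the second governing equation κ·∂_t b₁ + ∂_x∂_x b₁ + v·∂_x b₁ = 2·κ·b₁·∂_x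 b₊ holds on Ω if and only if for every t and every k = 1, …, κ the following three equations hold: (3.22) (κ·Q_k' − t + Q_k²)·A_k = 2·(Σ_{j≠k} A_j/(Q_k − Q_j) − 2·Σ_{j=1}^κ Q_j − κ·J₀); (3.23) κ·A_k' = −2·Q_k·A_k + 2·Σ_{j≠k} (A_k − A_j)/(Q_k − Q_j)²; (3.24) κ·J₀' + 2·Σ_{k=1}^κ Q_k' = (1/κ)·Σ_{k=1}^κ A_k. -/
/-!
Write `u = 2κ b₁ = Σₖ Aₖ/(x - Qₖ) + g(t)` with `g = -2 Σ Qₖ - κ J₀`. Multiplied by `2κ`, the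
residual of (3.2) becomes `κ ∂ₜu + ∂ₓ²u + (t - x²) ∂ₓu - 2 u Σₖ 1/(x - Qₖ)²`. Expanding the
product of the two pole sums by partial fractions turns this into a rational function of `x`
with poles of order at most two at the `Qₖ`: its coefficients at `(x - Qₖ)⁻²` and `(x - Qₖ)⁻¹`
are the residuals of (3.22) and (3.23), and its constant term is `-κ` times that of (3.24). Such
a function vanishes identically off the poles if and only if all these coefficients vanish.
-/

open scoped BigOperators

open Filter Topology

theorem eq_zero_of_div_sub_sq_add_div_sub_add_eventually_eq_zero {p a b : ℝ} {f : ℝ → ℝ}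
    (hf : ContinuousAt f p) (h : ∀ᶠ x in 𝓝[≠] p, a / (x - p) ^ 2 + b / (x - p) + f x = 0) :
    a = 0 ∧ b = 0 := by
  have hvanish : ∀ {G : ℝ → ℝ}, ContinuousAt G p → (∀ᶠ x in 𝓝[≠] p, G x = 0) → G p = 0 :=
    fun hG hG0 =>
      ((hG.eventuallyEq_nhds_iff_eventuallyEq_nhdsNE continuousAt_const).mp hG0).eq_of_nhds
  have ha : a = 0 := by
    have := hvanish (G := fun x => a + b * (x - p) + (x - p) ^ 2 * f x) (by fun_prop) <| by
      filter_upwards [h, self_mem_nhdsWithin] with x hx hxp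
      have : x - p ≠ 0 := sub_ne_zero.2 hxp
      field_simp at hx
      linear_combination hx
    simpa using this
  refine ⟨ha, ?_⟩
  have := hvanish (G := fun x => b + (x - p) * f x) (by fun_prop) <| by
    filter_upwards [h, self_mem_nhdsWithin] with x hx hxp
    have : x - p ≠ 0 := sub_ne_zero.2 hxp
    rw [ha, zero_div, zero_add] at hx
    field_simp at hx
    linear_combination hx
  simpa using this

theorem compl_range_mem_nhdsNE {X ι : Type*} [TopologicalSpace X] [T1Space X] [Finite ι]
    (q : ι → X) (p : X) :
    (Set.range q)ᶜ ∈ 𝓝[≠] p :=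
  mem_of_superset
    (nhdsNE_of_nhdsNE_sdiff_finite self_mem_nhdsWithin (Set.finite_range q).to_subtype)
    fun _ hx => hx.2

section PoleSums

variable {ι : Type*} [Fintype ι]

theorem sum_div_sub_sq_add_sum_div_sub_add_eq_zero_iff {q : ι → ℝ} (hq : Function.Injective q)
    (a b : ι → ℝ) (c : ℝ) :
    (∀ x, (∀ k, x ≠ q k) → ∑ k, a k / (x - q k) ^ 2 + ∑ k, b k / (x - q k) + c = 0)
      ↔ (∀ k, a k = 0) ∧ (∀ k, b k = 0) ∧ c = 0 := by
  classical
  refine ⟨fun h => ?_, fun ⟨ha, hb, hc⟩ x _ => by simp [ha, hb, hc]⟩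
  have hcoeff : ∀ k, a k = 0 ∧ b k = 0 := by
    intro k
    have hne : ∀ j ∈ Finset.univ.erase k, q k - q j ≠ 0 :=
      fun j hj => sub_ne_zero.2 (hq.ne (Finset.ne_of_mem_erase hj).symm)
    refine eq_zero_of_div_sub_sq_add_div_sub_add_eventually_eq_zero (p := q k) (f := fun x =>
        ∑ j ∈ Finset.univ.erase k, a j / (x - q j) ^ 2
          + ∑ j ∈ Finset.univ.erase k, b j / (x - q j) + c)
      (((tendsto_finsetSum _ fun j hj => ?_).add (tendsto_finsetSum _ fun j hj => ?_)).add
        continuousAt_const) ?_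
    · exact continuousAt_const.div (by fun_prop) (pow_ne_zero _ (hne j hj))
    · exact continuousAt_const.div (by fun_prop) (hne j hj)
    · filter_upwards [compl_range_mem_nhdsNE q (q k)] with x hx
      have := h x fun j hj => hx ⟨j, hj.symm⟩
      rw [← Finset.add_sum_erase _ _ (Finset.mem_univ k),
        ← Finset.add_sum_erase _ _ (Finset.mem_univ k)] at this
      linear_combination this
  refine ⟨fun k => (hcoeff k).1, fun k => (hcoeff k).2, ?_⟩
  obtain ⟨x, hx⟩ := (Set.finite_range q).infinite_compl.nonempty
  simpa [hcoeff] using h x fun j hj => hx ⟨j, hj.symm⟩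

theorem Finset.sum_sum_erase_swap [DecidableEq ι] {M : Type*} [AddCommMonoid M]
    (f : ι → ι → M) :
    ∑ k, ∑ j ∈ univ.erase k, f k j = ∑ k, ∑ j ∈ univ.erase k, f j k :=
  Finset.sum_comm' fun _ _ => by simp [ne_comm]

theorem Finset.sum_sum_erase_eq_of_add_swap [DecidableEq ι] {𝕜 : Type*} [Field 𝕜] [CharZero 𝕜]
    {f g : ι → ι → 𝕜} (h : ∀ k j, k ≠ j → f k j + f j k = g k j + g j k) :
    ∑ k, ∑ j ∈ univ.erase k, f k j = ∑ k, ∑ j ∈ univ.erase k, g k j := by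
  have hsymm : ∀ F : ι → ι → 𝕜, 2 * ∑ k, ∑ j ∈ univ.erase k, F k j
      = ∑ k, ∑ j ∈ univ.erase k, (F k j + F j k) := fun F => by
    simp only [sum_add_distrib, ← sum_sum_erase_swap (fun k j => F j k)]; ring
  refine mul_left_cancel₀ (two_ne_zero' 𝕜) ?_
  rw [hsymm, hsymm]
  exact sum_congr rfl fun k _ => sum_congr rfl fun j hj => h k j (ne_of_mem_erase hj).symm

theorem sum_div_sub_mul_sum_one_div_sub_sq [DecidableEq ι] {q : ι → ℝ}
    (hq : Function.Injective q) (a : ι → ℝ) {x : ℝ} (hx : ∀ k, x ≠ q k) :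
    (∑ k, a k / (x - q k)) * ∑ k, 1 / (x - q k) ^ 2
      = ∑ k, a k / (x - q k) ^ 3
        + ∑ k, (∑ j ∈ Finset.univ.erase k, (a k - a j) / (q k - q j) ^ 2) / (x - q k)
        + ∑ k, (∑ j ∈ Finset.univ.erase k, a j / (q k - q j)) / (x - q k) ^ 2 := by
  have hxq : ∀ k, x - q k ≠ 0 := fun k => sub_ne_zero.2 (hx k)
  have hqq : ∀ k j, k ≠ j → q k - q j ≠ 0 := fun k j h => sub_ne_zero.2 (hq.ne h)
  have hdiag : ∀ k, ∑ j, a k / (x - q k) * (1 / (x - q j) ^ 2)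
      = a k / (x - q k) ^ 3 + ∑ j ∈ Finset.univ.erase k, a k / ((x - q k) * (x - q j) ^ 2) := by
    intro k
    rw [← Finset.add_sum_erase _ _ (Finset.mem_univ k)]
    congr 1
    · field_simp [hxq k]
    · exact Finset.sum_congr rfl fun j _ => by field_simp
  -- partial fractions of `1 / ((x - q k) * (x - q j) ^ 2)`, symmetrised in `k` and `j`
  have hoff := Finset.sum_sum_erase_eq_of_add_swap
    (f := fun k j => a k / ((x - q k) * (x - q j) ^ 2))
    (g := fun k j => (a k - a j) / (q k - q j) ^ 2 / (x - q k) + a j / (q k - q j) / (x - q k) ^ 2)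
    fun k j hkj => by
      have := hqq k j hkj; have := hqq j k hkj.symm; have := hxq k; have := hxq j
      field_simp
      ring
  rw [Finset.sum_mul_sum, Finset.sum_congr rfl fun k _ => hdiag k, Finset.sum_add_distrib, hoff,
    add_assoc]
  simp only [Finset.sum_add_distrib, Finset.sum_div]

theorem residual_eq_sum_div_sub_sq_add_sum_div_sub [DecidableEq ι] {q a q' a' : ι → ℝ} (hq : Function.Injective q)
    (κ t g g' : ℝ) {x : ℝ} (hx : ∀ k, x ≠ q k) :
    κ * (∑ k, (a' k * (x - q k) + a k * q' k) / (x - q k) ^ 2 + g')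
        + 2 * ∑ k, a k / (x - q k) ^ 3 + (t - x ^ 2) * -∑ k, a k / (x - q k) ^ 2
        - 2 * (∑ k, a k / (x - q k) + g) * ∑ k, 1 / (x - q k) ^ 2
      = ∑ k, ((κ * q' k - t + q k ^ 2) * a k
            - 2 * (∑ j ∈ Finset.univ.erase k, a j / (q k - q j) + g)) / (x - q k) ^ 2
        + ∑ k, (κ * a' k + 2 * q k * a k
            - 2 * ∑ j ∈ Finset.univ.erase k, (a k - a j) / (q k - q j) ^ 2) / (x - q k)
        + (∑ k, a k + κ * g') := by
  set r := fun k => ∑ j ∈ Finset.univ.erase k, a j / (q k - q j)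
  set s := fun k => ∑ j ∈ Finset.univ.erase k, (a k - a j) / (q k - q j) ^ 2
  have hterm : ∀ k, κ * ((a' k * (x - q k) + a k * q' k) / (x - q k) ^ 2)
      + (t - x ^ 2) * -(a k / (x - q k) ^ 2)
      - 2 * (s k / (x - q k) + r k / (x - q k) ^ 2) - 2 * g * (1 / (x - q k) ^ 2)
      = ((κ * q' k - t + q k ^ 2) * a k - 2 * (r k + g)) / (x - q k) ^ 2
        + (κ * a' k + 2 * q k * a k - 2 * s k) / (x - q k) + a k := by
    intro k
    have := sub_ne_zero.2 (hx k)
    field_simp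
    ring
  have hsum := Finset.sum_congr rfl fun k (_ : k ∈ Finset.univ) => hterm k
  simp only [Finset.sum_add_distrib, Finset.sum_sub_distrib, ← Finset.mul_sum,
    Finset.sum_neg_distrib] at hsum
  linear_combination hsum - 2 * sum_div_sub_mul_sum_one_div_sub_sq hq a hx

theorem hasDerivAt_sum_div_sub_pow (a q : ι → ℝ) (n : ℕ) {x : ℝ} (hx : ∀ k, x ≠ q k) :
    HasDerivAt (fun y => ∑ k, a k / (y - q k) ^ n)
      (-(n * ∑ k, a k / (x - q k) ^ (n + 1))) x := by
  rw [Finset.mul_sum, ← Finset.sum_neg_distrib]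
  refine HasDerivAt.fun_sum fun k _ => ?_
  have hxk : x - q k ≠ 0 := sub_ne_zero.2 (hx k)
  refine ((hasDerivAt_const x (a k)).fun_div (((hasDerivAt_id' x).sub_const (q k)).fun_pow n)
    (pow_ne_zero n hxk)).congr_deriv ?_
  rcases n with _ | n
  · simp
  · rw [Nat.add_sub_cancel]
    field_simp
    push_cast
    ring

theorem hasDerivAt_sum_div_const_sub {a q : ι → ℝ → ℝ} {a' q' : ι → ℝ} {t : ℝ} (x : ℝ)
    (ha : ∀ k, HasDerivAt (a k) (a' k) t) (hq : ∀ k, HasDerivAt (q k) (q' k) t)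
    (hx : ∀ k, x ≠ q k t) :
    HasDerivAt (fun s => ∑ k, a k s / (x - q k s))
      (∑ k, (a' k * (x - q k t) + a k t * q' k) / (x - q k t) ^ 2) t :=
  HasDerivAt.fun_sum fun k _ =>
    ((ha k).fun_div ((hq k).const_sub x) (sub_ne_zero.2 (hx k))).congr_deriv (by ring)

theorem Differentiable.sum_erase_one_div_sub [DecidableEq ι] {q : ι → ℝ → ℝ}
    (hq : ∀ k, Differentiable ℝ (q k)) (hqd : ∀ t, ∀ j k, j ≠ k → q j t ≠ q k t) (k : ι) :
    Differentiable ℝ fun t => ∑ j ∈ Finset.univ.erase k, 1 / (q k t - q j t) :=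
  Differentiable.fun_sum fun j hj => (differentiable_const 1).div ((hq k).sub (hq j))
    fun t => sub_ne_zero.2 (hqd t k j (Finset.ne_of_mem_erase hj).symm)

end PoleSums

theorem pT_div_const (F : ℝ → ℝ → ℝ) (c : ℝ) :
    pT (fun t x => F t x / c) = fun t x => pT F t x / c := by
  ext t x; exact deriv_div_const _

theorem pX_div_const (F : ℝ → ℝ → ℝ) (c : ℝ) :
    pX (fun t x => F t x / c) = fun t x => pX F t x / c := by
  ext t x; exact deriv_div_const _

noncomputable def poleSum {ι : Type*} [Fintype ι] (a q : ι → ℝ → ℝ) (g : ℝ → ℝ) (t x : ℝ) : ℝ :=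
  ∑ k, a k t / (x - q k t) + g t

section PoleSumDerivatives

variable {ι : Type*} [Fintype ι] {a q : ι → ℝ → ℝ} {g : ℝ → ℝ} {t x : ℝ}

theorem pX_poleSum (hx : ∀ k, x ≠ q k t) :
    pX (poleSum a q g) t x = -∑ k, a k t / (x - q k t) ^ 2 := by
  simpa [pX, poleSum] using
    ((hasDerivAt_sum_div_sub_pow (a · t) (q · t) 1 hx).add_const (g t)).deriv

theorem pX_const_mul_sum_one_div_sub (c : ℝ) (hx : ∀ k, x ≠ q k t) :
    pX (fun t x => c * ∑ k, 1 / (x - q k t)) t x = -c * ∑ k, 1 / (x - q k t) ^ 2 := by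
  simpa [pX] using ((hasDerivAt_sum_div_sub_pow (fun _ => 1) (q · t) 1 hx).const_mul c).deriv

theorem pX_pX_poleSum (hx : ∀ k, x ≠ q k t) :
    pX (pX (poleSum a q g)) t x = 2 * ∑ k, a k t / (x - q k t) ^ 3 := by
  have hev : pX (poleSum a q g) t =ᶠ[𝓝 x] fun y => -∑ k, a k t / (y - q k t) ^ 2 := by
    filter_upwards [eventually_all.2 fun k => eventually_ne_nhds (hx k)] with y hy
    exact pX_poleSum hy
  rw [pX, hev.deriv_eq, ((hasDerivAt_sum_div_sub_pow (a · t) (q · t) 2 hx).fun_neg).deriv]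
  norm_num

theorem pT_poleSum {a' q' : ι → ℝ} {g' : ℝ} (ha : ∀ k, HasDerivAt (a k) (a' k) t)
    (hq : ∀ k, HasDerivAt (q k) (q' k) t) (hg : HasDerivAt g g' t) (hx : ∀ k, x ≠ q k t) :
    pT (poleSum a q g) t x
      = ∑ k, (a' k * (x - q k t) + a k t * q' k) / (x - q k t) ^ 2 + g' :=
  ((hasDerivAt_sum_div_const_sub x ha hq hx).add hg).deriv

theorem poleSum_residual_eq_zero_iff [DecidableEq ι] (κ : ℝ) {a' q' : ι → ℝ} {g' : ℝ}
    (ha : ∀ k, HasDerivAt (a k) (a' k) t) (hq : ∀ k, HasDerivAt (q k) (q' k) t)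
    (hg : HasDerivAt g g' t) (hqt : Function.Injective (q · t)) :
    (∀ x, (∀ k, x ≠ q k t) →
        κ * pT (poleSum a q g) t x + pX (pX (poleSum a q g)) t x
          + (t - x ^ 2) * pX (poleSum a q g) t x
          - 2 * poleSum a q g t x * ∑ k, 1 / (x - q k t) ^ 2 = 0)
      ↔ (∀ k, (κ * q' k - t + q k t ^ 2) * a k t
            - 2 * (∑ j ∈ Finset.univ.erase k, a j t / (q k t - q j t) + g t) = 0)
        ∧ (∀ k, κ * a' k + 2 * q k t * a k t
            - 2 * ∑ j ∈ Finset.univ.erase k, (a k t - a j t) / (q k t - q j t) ^ 2 = 0)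
        ∧ ∑ k, a k t + κ * g' = 0 := by
  rw [← sum_div_sub_sq_add_sum_div_sub_add_eq_zero_iff hqt]
  refine forall₂_congr fun x hx => ?_
  rw [pT_poleSum ha hq hg hx, pX_pX_poleSum hx, pX_poleSum hx, poleSum,
    residual_eq_sum_div_sub_sq_add_sum_div_sub hqt κ t (g t) g' hx]

end PoleSumDerivatives

/-- for quantum Painlevé II with the pole ansatz (`N = κ` poles), the
second governing equation (3.2) holds away from the poles if and only if the system
(3.22)–(3.24) of ODEs holds for every `t` and every `k`. -/
theorem qp2_second_governing_equation_iff_ode_system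
    (κ : ℕ) (hκ : 1 ≤ κ)
    (Q : Fin κ → ℝ → ℝ)
    (hQ : ∀ k, ContDiff ℝ 2 (Q k))
    (hQd : ∀ t, ∀ j k : Fin κ, j ≠ k → Q j t ≠ Q k t)
    (J₀ : ℝ → ℝ) (hJ₀ : ContDiff ℝ 1 J₀)
    (v : ℝ → ℝ → ℝ) (hv : ∀ t x, v t x = t - x ^ 2)
    (R : Fin κ → ℝ → ℝ)
    (hR : ∀ k t, R k t = ∑ j ∈ Finset.univ.erase k, 1 / (Q k t - Q j t))
    (A : Fin κ → ℝ → ℝ)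
    (hA : ∀ k t, A k t = (κ : ℝ) * deriv (Q k) t + t - (Q k t) ^ 2 - 2 * R k t)
    (bp b₁ : ℝ → ℝ → ℝ)
    (hbp : ∀ t x, bp t x = -(1 / (κ : ℝ)) * ∑ k, 1 / (x - Q k t))
    (hb₁ : ∀ t x, 2 * b₁ t x = (1 / (κ : ℝ)) * ∑ k, A k t / (x - Q k t)
        - (2 / (κ : ℝ)) * ∑ k, Q k t - J₀ t) :
    (∀ t x, (∀ k, x ≠ Q k t) →
        (κ : ℝ) * pT b₁ t x + pX (pX b₁) t x + v t x * pX b₁ t x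
          = 2 * (κ : ℝ) * b₁ t x * pX bp t x)
    ↔
    (∀ t, ∀ k : Fin κ,
        (((κ : ℝ) * deriv (Q k) t - t + (Q k t) ^ 2) * A k t
          = 2 * ((∑ j ∈ Finset.univ.erase k, A j t / (Q k t - Q j t))
              - 2 * ∑ j, Q j t - (κ : ℝ) * J₀ t))
      ∧ ((κ : ℝ) * deriv (A k) t
          = -2 * Q k t * A k t
            + 2 * ∑ j ∈ Finset.univ.erase k,
                (A k t - A j t) / (Q k t - Q j t) ^ 2)
      ∧ ((κ : ℝ) * deriv J₀ t + 2 * ∑ j, deriv (Q j) t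
          = (1 / (κ : ℝ)) * ∑ j, A j t)) := by
  have hκ0 : (κ : ℝ) ≠ 0 := Nat.cast_ne_zero.2 (by omega)
  have : Nonempty (Fin κ) := ⟨⟨0, hκ⟩⟩
  have hQ' : ∀ k, Differentiable ℝ (Q k) := fun k => (hQ k).differentiable (by norm_num)
  have hA' : ∀ k, Differentiable ℝ (A k) := fun k => by
    have hR' : Differentiable ℝ (R k) := by
      simpa only [← hR] using Differentiable.sum_erase_one_div_sub hQ' hQd k
    have := (hQ k).differentiable_deriv_two
    rw [show A k = _ from funext (hA k)]
    fun_prop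
  set g : ℝ → ℝ := fun s => -(2 * ∑ k, Q k s) - κ * J₀ s
  have hg : ∀ t, HasDerivAt g (-(2 * ∑ k, deriv (Q k) t) - κ * deriv J₀ t) t := fun t =>
    ((HasDerivAt.fun_sum fun k _ => (hQ' k t).hasDerivAt).const_mul 2).neg.sub
      ((hJ₀.differentiable (by norm_num) t).hasDerivAt.const_mul _)
  have hb₁u : b₁ = fun t x => poleSum A Q g t x / (2 * κ) := by
    ext t x
    rw [poleSum, eq_div_iff (by positivity)]
    linear_combination (norm := (field_simp; ring)) (κ : ℝ) * hb₁ t x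
  have hbp' : bp = fun t x => -(1 / (κ : ℝ)) * ∑ k, 1 / (x - Q k t) := funext₂ hbp
  have hinj : ∀ t, Function.Injective (Q · t) := fun t j k h =>
    by_contra fun hjk => hQd t j k hjk h
  refine forall_congr' fun t => (forall₂_congr fun x hx => ?_).trans
    ((poleSum_residual_eq_zero_iff (κ : ℝ) (fun k => (hA' k t).hasDerivAt)
      (fun k => (hQ' k t).hasDerivAt) (hg t) (hinj t)).trans ?_)
  · simp only [hb₁u, hbp', pT_div_const, pX_div_const, pX_const_mul_sum_one_div_sub _ hx, hv]
    rw [← sub_eq_zero]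
    field_simp
    rw [mul_zero]
  · simp only [forall_and, forall_const, g]
    refine and_congr (forall_congr' fun k => ?_) (and_congr (forall_congr' fun k => ?_) ?_)
    · constructor <;> intro h <;> linarith
    · constructor <;> intro h <;> linarith
    · rw [one_div_mul_eq_div, eq_div_iff hκ0]
      constructor <;> intro h <;> linarith
end

section
/- (Appendix B: equivalence of the A_k-evolution equations with the Calogero equations of motion.) Let κ ≥ 1 be an integer and Q₁, …, Q_κ : ℝ → ℝ twice continuously differentiable with Q_j(t) ≠ Q_k(t) for all j ≠ k and all t. Define R_k(t) = Σ_{j≠k} 1/(Q_k − Q_j) and A_k(t) = κ·Q_k' + t − Q_k² − 2·R_k. Then for every k and every t, the equation κ·A_k' = −2·Q_k·A_k + 2·Σ_{j≠k} (A_k − A_j)/(Q_k − Q_j)² holds if and only if the Calogero equation of motion holds: κ²·Q_k'' = −2·Q_k·(t − Q_k²) + (κ − 2) − Σ_{j≠k} 8/(Q_k − Q_j)³. -/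
/-!
Expanding `A_k' ` and the `A_j`, the difference of the two sides of the evolution equation equals
`κ² Q_k'' + 2 Q_k (t - Q_k²) - (κ - 2) - 4 Σ_{j≠k} (R_k - R_j)/(Q_k - Q_j)²`. Splitting off the
`l = j` and `l = k` terms of `R_k - R_j`, the last sum is `8 Σ_{j≠k} 1/(Q_k - Q_j)³` plus a double
sum over `j ≠ l` of a summand antisymmetric in `j, l`, which vanishes.
-/

open Finset Function

theorem Finset.sum_sum_erase_eq_zero_of_antisymm {ι M : Type*} [DecidableEq ι] [AddCommGroup M]
    [IsAddTorsionFree M] (s : Finset ι) {f : ι → ι → M}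
    (hf : ∀ i ∈ s, ∀ j ∈ s, i ≠ j → f j i = -f i j) :
    ∑ i ∈ s, ∑ j ∈ s.erase i, f i j = 0 := by
  rw [← self_eq_neg]
  conv_lhs => rw [sum_comm' (t' := s) (s' := s.erase) (by simp only [mem_erase]; tauto)]
  rw [← sum_neg_distrib]
  refine sum_congr rfl fun j hj ↦ ?_
  rw [← sum_neg_distrib]
  refine sum_congr rfl fun i hi ↦ ?_
  obtain ⟨hij, hi⟩ := mem_erase.1 hi
  exact hf j hj i hi hij.symm

section Algebra

variable {ι K : Type*} [Fintype ι] [DecidableEq ι] [Field K]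

def invDiffSum (q : ι → K) (k : ι) : K := ∑ j ∈ univ.erase k, 1 / (q k - q j)

def calogeroA (c : K) (p q : ι → K) (t : K) (k : ι) : K :=
  c * p k + t - q k ^ 2 - 2 * invDiffSum q k

variable {q : ι → K}

theorem invDiffSum_sub_invDiffSum (hq : Injective q) {j k : ι} (hjk : j ≠ k) :
    invDiffSum q k - invDiffSum q j
      = 2 / (q k - q j)
        + ∑ l ∈ (univ.erase k).erase j, (q j - q k) / ((q k - q l) * (q j - q l)) := by
  have hd {i j : ι} (h : i ≠ j) : q i - q j ≠ 0 := sub_ne_zero.2 (hq.ne h)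
  rw [invDiffSum, invDiffSum, ← add_sum_erase _ _ (mem_erase.2 ⟨hjk, mem_univ j⟩),
    ← add_sum_erase (univ.erase j) _ (mem_erase.2 ⟨hjk.symm, mem_univ k⟩), erase_right_comm,
    add_sub_add_comm, ← sum_sub_distrib]
  congr 1
  · have := hd hjk
    have := hd hjk.symm
    field_simp
    ring
  · refine sum_congr rfl fun l hl ↦ ?_
    obtain ⟨hlk, hlj, -⟩ := by simpa only [mem_erase] using hl
    have := hd (Ne.symm hlk)
    have := hd (Ne.symm hlj)
    field_simp
    ring

theorem sum_calogeroA_sub_div_sq (hq : Injective q) (c : K) (p : ι → K) (t : K) (k : ι) :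
    ∑ j ∈ univ.erase k, (calogeroA c p q t k - calogeroA c p q t j) / (q k - q j) ^ 2
      = c * ∑ j ∈ univ.erase k, (p k - p j) / (q k - q j) ^ 2 - 2 * q k * invDiffSum q k
        + (Fintype.card ι - 1)
        - 2 * ∑ j ∈ univ.erase k, (invDiffSum q k - invDiffSum q j) / (q k - q j) ^ 2 := by
  have hterm : ∀ j ∈ univ.erase k,
      (calogeroA c p q t k - calogeroA c p q t j) / (q k - q j) ^ 2
      = c * ((p k - p j) / (q k - q j) ^ 2) - 2 * q k * (1 / (q k - q j)) + 1
        - 2 * ((invDiffSum q k - invDiffSum q j) / (q k - q j) ^ 2) := by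
    intro j hj
    have := sub_ne_zero.2 (hq.ne (ne_of_mem_erase hj).symm)
    unfold calogeroA
    field_simp
    ring
  rw [sum_congr rfl hterm, sum_sub_distrib, sum_add_distrib, sum_sub_distrib, ← mul_sum,
    ← mul_sum, ← mul_sum, sum_erase_eq_sub (f := fun _ ↦ (1 : K)) (mem_univ k), sum_const,
    card_univ, nsmul_one, invDiffSum]

variable [CharZero K]

theorem sum_invDiffSum_sub_div_sq (hq : Injective q) (k : ι) :
    ∑ j ∈ univ.erase k, (invDiffSum q k - invDiffSum q j) / (q k - q j) ^ 2
      = ∑ j ∈ univ.erase k, 2 / (q k - q j) ^ 3 := by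
  have hd {i j : ι} (h : i ≠ j) : q i - q j ≠ 0 := sub_ne_zero.2 (hq.ne h)
  -- after dividing by `(q k - q j) ^ 2`, the three-body terms are antisymmetric in `j, l`
  have hsplit : ∀ j ∈ univ.erase k,
      (invDiffSum q k - invDiffSum q j) / (q k - q j) ^ 2
        = 2 / (q k - q j) ^ 3
          - ∑ l ∈ (univ.erase k).erase j, 1 / ((q k - q j) * (q k - q l) * (q j - q l)) := by
    intro j hj
    have hjk := ne_of_mem_erase hj
    rw [invDiffSum_sub_invDiffSum hq hjk, add_div, sum_div, ← sub_neg_eq_add, ← sum_neg_distrib]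
    congr 1
    · have := hd hjk.symm
      field_simp
    · refine sum_congr rfl fun l hl ↦ ?_
      obtain ⟨hlj, hl⟩ := mem_erase.1 hl
      have := hd hjk.symm
      have := hd (ne_of_mem_erase hl).symm
      have := hd hlj.symm
      field_simp
      ring
  rw [sum_congr rfl hsplit, sum_sub_distrib, sum_sum_erase_eq_zero_of_antisymm, sub_zero]
  intro i hi j hj hij
  have := hd (ne_of_mem_erase hi).symm
  have := hd (ne_of_mem_erase hj).symm
  have := hd hij
  have := hd hij.symm
  field_simp
  ring

theorem evolution_sub_eq_calogero_sub (hq : Injective q) {t : K} {p A : ι → K}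
    (hA : ∀ j, A j = calogeroA (Fintype.card ι : K) p q t j) (a : K) (k : ι) :
    (Fintype.card ι : K) * (Fintype.card ι * a + 1 - 2 * q k * p k
        + 2 * ∑ j ∈ univ.erase k, (p k - p j) / (q k - q j) ^ 2)
      - (-2 * q k * A k + 2 * ∑ j ∈ univ.erase k, (A k - A j) / (q k - q j) ^ 2)
    = (Fintype.card ι : K) ^ 2 * a
      - (-2 * q k * (t - q k ^ 2) + ((Fintype.card ι : K) - 2)
        - ∑ j ∈ univ.erase k, 8 / (q k - q j) ^ 3) := by
  have hcube : ∑ j ∈ univ.erase k, 8 / (q k - q j) ^ 3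
      = 4 * ∑ j ∈ univ.erase k, 2 / (q k - q j) ^ 3 := by
    rw [mul_sum]
    exact sum_congr rfl fun j _ ↦ by ring
  simp only [hA]
  rw [sum_calogeroA_sub_div_sq hq, sum_invDiffSum_sub_div_sq hq, hcube, calogeroA]
  ring

end Algebra

section Calculus

variable {ι 𝕜 : Type*} [Fintype ι] [DecidableEq ι] [NontriviallyNormedField 𝕜] {Q : ι → 𝕜 → 𝕜}
  {t : 𝕜}

theorem hasDerivAt_invDiffSum {Q' : ι → 𝕜} (hQ : ∀ j, HasDerivAt (Q j) (Q' j) t)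
    (hQt : Injective (Q · t)) (k : ι) :
    HasDerivAt (fun s ↦ invDiffSum (Q · s) k)
      (-∑ j ∈ univ.erase k, (Q' k - Q' j) / (Q k t - Q j t) ^ 2) t := by
  simp only [invDiffSum, one_div, ← sum_neg_distrib]
  refine HasDerivAt.fun_sum fun j hj ↦ ?_
  have hne : Q k t - Q j t ≠ 0 := sub_ne_zero.2 (hQt.ne (ne_of_mem_erase hj).symm)
  exact (((hQ k).fun_sub (hQ j)).inv hne).congr_deriv (neg_div _ _)

theorem hasDerivAt_calogeroA (c : 𝕜) {P : ι → 𝕜 → 𝕜} {a : 𝕜} (hQ : ∀ j, HasDerivAt (Q j) (P j t) t)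
    (hQt : Injective (Q · t)) {k : ι} (hP : HasDerivAt (P k) a t) :
    HasDerivAt (fun s ↦ calogeroA c (P · s) (Q · s) s k)
      (c * a + 1 - 2 * Q k t * P k t
        + 2 * ∑ j ∈ univ.erase k, (P k t - P j t) / (Q k t - Q j t) ^ 2) t :=
  ((((hP.const_mul c).fun_add (hasDerivAt_id' t)).fun_sub ((hQ k).fun_pow 2)).fun_sub
    ((hasDerivAt_invDiffSum hQ hQt k).const_mul 2)).congr_deriv (by push_cast; ring)

end Calculus

theorem A_evolution_iff_calogero_general
    (κ : ℕ)
    (Q : Fin κ → ℝ → ℝ)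
    (hQ : ∀ k, ContDiff ℝ 2 (Q k))
    (hQd : ∀ t, ∀ j k : Fin κ, j ≠ k → Q j t ≠ Q k t)
    (R : Fin κ → ℝ → ℝ)
    (hR : ∀ k t, R k t = ∑ j ∈ Finset.univ.erase k, 1 / (Q k t - Q j t))
    (A : Fin κ → ℝ → ℝ)
    (hA : ∀ k t, A k t = (κ : ℝ) * deriv (Q k) t + t - (Q k t) ^ 2 - 2 * R k t) :
    ∀ k : Fin κ, ∀ t : ℝ,
      ((κ : ℝ) * deriv (A k) t
          = -2 * Q k t * A k t
            + 2 * ∑ j ∈ Finset.univ.erase k, (A k t - A j t) / (Q k t - Q j t) ^ 2)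
      ↔
      ((κ : ℝ) ^ 2 * deriv (deriv (Q k)) t
          = -2 * Q k t * (t - (Q k t) ^ 2) + ((κ : ℝ) - 2)
            - ∑ j ∈ Finset.univ.erase k, 8 / (Q k t - Q j t) ^ 3) := by
  intro k t
  have hQt : Injective (Q · t) := fun i j h ↦ by_contra fun hij ↦ hQd t i j hij h
  have hQ' (j : Fin κ) : HasDerivAt (Q j) (deriv (Q j) t) t :=
    ((hQ j).differentiable (by norm_num)).differentiableAt.hasDerivAt
  have hQ'' : HasDerivAt (deriv (Q k)) (deriv (deriv (Q k)) t) t := by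
    have := (hQ k).differentiable_iteratedDeriv 1 (by norm_num)
    rw [iteratedDeriv_one] at this
    exact this.differentiableAt.hasDerivAt
  have hAcal (j : Fin κ) : A j = fun s ↦ calogeroA (κ : ℝ) (fun i ↦ deriv (Q i) s) (Q · s) s j :=
    funext fun s ↦ by rw [hA, hR]; rfl
  have hderiv : deriv (A k) t = κ * deriv (deriv (Q k)) t + 1 - 2 * Q k t * deriv (Q k) t
      + 2 * ∑ j ∈ univ.erase k, (deriv (Q k) t - deriv (Q j) t) / (Q k t - Q j t) ^ 2 := by
    rw [hAcal k]
    exact (hasDerivAt_calogeroA _ hQ' hQt hQ'').deriv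
  have hdefect := evolution_sub_eq_calogero_sub hQt (A := (A · t))
    (fun j ↦ by rw [Fintype.card_fin, hAcal]) (deriv (deriv (Q k)) t) k
  rw [Fintype.card_fin] at hdefect
  rw [hderiv, ← sub_eq_zero, hdefect, sub_eq_zero]

/-- Appendix B: the evolution equation (3.23) for `A_k` is
pointwise equivalent to the Calogero equation of motion (3.29). -/
theorem A_evolution_iff_calogero
    (κ : ℕ) (hκ : 1 ≤ κ)
    (Q : Fin κ → ℝ → ℝ)
    (hQ : ∀ k, ContDiff ℝ 2 (Q k))
    (hQd : ∀ t, ∀ j k : Fin κ, j ≠ k → Q j t ≠ Q k t)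
    (R : Fin κ → ℝ → ℝ)
    (hR : ∀ k t, R k t = ∑ j ∈ Finset.univ.erase k, 1 / (Q k t - Q j t))
    (A : Fin κ → ℝ → ℝ)
    (hA : ∀ k t, A k t = (κ : ℝ) * deriv (Q k) t + t - (Q k t) ^ 2 - 2 * R k t) :
    ∀ k : Fin κ, ∀ t : ℝ,
      ((κ : ℝ) * deriv (A k) t
          = -2 * Q k t * A k t
            + 2 * ∑ j ∈ Finset.univ.erase k, (A k t - A j t) / (Q k t - Q j t) ^ 2)
      ↔
      ((κ : ℝ) ^ 2 * deriv (deriv (Q k)) t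
          = -2 * Q k t * (t - (Q k t) ^ 2) + ((κ : ℝ) - 2)
            - ∑ j ∈ Finset.univ.erase k, 8 / (Q k t - Q j t) ^ 3) :=
  A_evolution_iff_calogero_general κ Q hQ hQd R hR A hA
end
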